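/- Let X be a quasi-projective variety over ℂ, D̃ a nonzero effective Cartier divisor on X, p₁ : X × 𝔸¹ → X the trivial line bundle with zero section X₀, and Z the closed subscheme of X × 𝔸¹ with ideal 𝓘_Z = 𝒪(−X₀) + 𝒪(−p₁*D̃). Then the affine modification of X × 𝔸¹ with center (𝓘_Z, p₁*D̃) is isomorphic, as a scheme over X, to the total space of the line bundle associated to 𝒪_X(−D̃), and under this isomorphism the modification morphism corresponds to the X-morphism of line bundles induced by the canonical section of 𝒪_X(D̃) with divisor D̃. -/

import Mathlib

/-!
On the chart `X × 𝔸¹ = Spec A[T]` the center is `𝓘_Z = (T, g)`, so the affine modification is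
`A[T][T/g] ⊆ A[T][1/g]`. Since `T = g · (T/g)`, this ring is just `A[T/g]`, and `T/g` is
algebraically independent over `A` because `g` is a non-zero-divisor: if `p(T/g) = 0` then
`g^(deg p) p(T/g)` is the polynomial `p.scaleRoots g` in `T`, which vanishes only for `p = 0`.
Sending `T/g ↦ S` therefore identifies the modification with `A[S]`, and `T = g · (T/g) ↦ g S`.
-/

open Polynomial

/-- `B[I/f] ⊆ B[1/f]`, the ring of the affine modification of `Spec B` with center `(I, f)`. -/
def affineModification {B : Type*} [CommRing B] (I : Ideal B) (f : B) :
    Subalgebra B (Localization.Away f) :=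
  Algebra.adjoin B {x | ∃ b ∈ I, algebraMap B _ f * x = algebraMap B _ b}

theorem affineModification_span_pair_eq_adjoin {B : Type*} [CommRing B] {a f : B}
    {s : Localization.Away f} (hs : algebraMap B _ f * s = algebraMap B _ a) :
    affineModification (Ideal.span {a, f}) f = Algebra.adjoin B {s} := by
  apply le_antisymm
  · refine Algebra.adjoin_le ?_
    rintro x ⟨b, hb, hbx⟩
    obtain ⟨u, v, rfl⟩ := Ideal.mem_span_pair.mp hb
    have hx : x = algebraMap B _ u * s + algebraMap B _ v := by
      apply (IsLocalization.Away.algebraMap_isUnit f).mul_left_cancel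
      rw [hbx, map_add, map_mul, map_mul, ← hs]
      ring
    rw [hx]
    exact add_mem (mul_mem (Subalgebra.algebraMap_mem _ u) (Algebra.self_mem_adjoin_singleton B s))
      (Subalgebra.algebraMap_mem _ v)
  · exact Algebra.adjoin_le (Set.singleton_subset_iff.mpr
      (Algebra.subset_adjoin ⟨a, Ideal.subset_span (by simp), hs⟩))

section PolynomialFraction

variable {R L : Type*} [CommRing R] [CommRing L] [Algebra R[X] L] [Algebra R L]
  [IsScalarTower R R[X] L] {g : R} {s : L}

theorem aeval_comp_C_mul_X_of_mul_eq (hs : algebraMap R[X] L (C g) * s = algebraMap R[X] L X)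
    (p : R[X]) : aeval s (p.comp (C g * X)) = algebraMap R[X] L p := by
  rw [aeval_comp, map_mul, aeval_C, aeval_X, IsScalarTower.algebraMap_apply R R[X] L,
    algebraMap_eq, hs, aeval_algebraMap_apply, aeval_X_left_apply]

theorem aeval_injective_of_mul_eq (hinj : Function.Injective (algebraMap R[X] L))
    (hs : algebraMap R[X] L (C g) * s = algebraMap R[X] L X) :
    Function.Injective (aeval (R := R) s) := by
  rw [injective_iff_map_eq_zero]
  intro p hp
  by_contra hp0
  apply scaleRoots_ne_zero hp0 g
  apply hinj
  have hscale := scaleRoots_eval₂_mul (algebraMap R L) s g (p := p)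
  rwa [← aeval_def, ← aeval_def, hp, mul_zero, IsScalarTower.algebraMap_apply R R[X] L,
    algebraMap_eq, hs, aeval_algebraMap_apply, aeval_X_left_apply, ← map_zero (algebraMap R[X] L)]
    at hscale

theorem restrictScalars_adjoin_singleton_eq_range_aeval
    (hs : algebraMap R[X] L (C g) * s = algebraMap R[X] L X) :
    (Algebra.adjoin R[X] {s}).restrictScalars R = (aeval (R := R) s).range := by
  rw [← Algebra.adjoin_singleton_eq_range_aeval]
  apply le_antisymm
  · intro x hx
    rw [Subalgebra.mem_restrictScalars] at hx
    induction hx using Algebra.adjoin_induction with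
    | mem x hx =>
      rw [Set.mem_singleton_iff.mp hx]
      exact Algebra.self_mem_adjoin_singleton R s
    | algebraMap p =>
      rw [Algebra.adjoin_singleton_eq_range_aeval, ← aeval_comp_C_mul_X_of_mul_eq hs]
      exact ⟨_, rfl⟩
    | add x y _ _ hx hy => exact add_mem hx hy
    | mul x y _ _ hx hy => exact mul_mem hx hy
  · exact Algebra.adjoin_le
      (Set.singleton_subset_iff.mpr (Algebra.self_mem_adjoin_singleton R[X] s))

end PolynomialFraction

theorem affine_modification_of_cylinder_is_line_bundle_general
    {A : Type*} [CommRing A]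
    (g : A) (hreg : g ∈ nonZeroDivisors A) :
    ∃ e : (Algebra.adjoin (Polynomial A)
        {x : Localization.Away (Polynomial.C g : Polynomial A) |
          ∃ b ∈ Ideal.span {(Polynomial.X : Polynomial A), Polynomial.C g},
            algebraMap (Polynomial A) (Localization.Away (Polynomial.C g : Polynomial A))
              (Polynomial.C g) * x =
            algebraMap (Polynomial A) (Localization.Away (Polynomial.C g : Polynomial A)) b})
      ≃ₐ[A] Polynomial A,
      e (algebraMap (Polynomial A) _ Polynomial.X) = Polynomial.C g * Polynomial.X := by
  let s : Localization.Away (C g : A[X]) := IsLocalization.mk' _ X ⟨C g, Submonoid.mem_powers _⟩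
  have hs : algebraMap A[X] _ (C g) * s = algebraMap A[X] _ X :=
    IsLocalization.mk'_spec' _ X ⟨C g, Submonoid.mem_powers _⟩
  have hinj : Function.Injective (algebraMap A[X] (Localization.Away (C g : A[X]))) :=
    IsLocalization.injective _ (Submonoid.powers_le.mpr
      (mem_nonZeroDivisors_of_leadingCoeff (by rwa [leadingCoeff_C])))
  have hrange : (affineModification (Ideal.span {X, C g}) (C g)).restrictScalars A =
      (aeval s).range := by
    rw [affineModification_span_pair_eq_adjoin hs,
      restrictScalars_adjoin_singleton_eq_range_aeval hs]
  let ψ := AlgEquiv.ofInjective _ (aeval_injective_of_mul_eq hinj hs)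
  refine ⟨(Subalgebra.equivOfEq _ _ hrange).trans ψ.symm, (ψ.symm_apply_eq).mpr (Subtype.ext ?_)⟩
  change algebraMap A[X] _ X = aeval s (C g * X)
  rw [← aeval_comp_C_mul_X_of_mul_eq hs X, X_comp]

/-- rendered on an affine chart of the quasi-projective variety `X` over `ℂ`,
where the nonzero effective Cartier divisor `D̃` has a regular local equation `g`:
`X × 𝔸¹ = Spec A[T]`, the zero section `X₀` is `{T = 0}`, the subscheme
`Z = p₁*D̃ ∩ X₀` has ideal `𝓘_Z = (T, g)`, and the affine modification of `X × 𝔸¹` with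
center `(𝓘_Z, p₁*D̃)` — the `A[T]`-algebra `A[T][𝓘_Z/g]` — is, as a scheme over `X`, the
total space of the line bundle `𝒪_X(−D̃)` (trivialized here: `Spec A[S]`), in such a way that
the modification morphism corresponds to the `X`-morphism of line bundles induced by the
canonical section of `𝒪_X(D̃)` with divisor `D̃`, i.e. to `A[T] → A[S], T ↦ g·S`. -/
theorem affine_modification_of_cylinder_is_line_bundle
    {A : Type*} [CommRing A] [Algebra ℂ A] [IsDomain A]
    (g : A) (hreg : g ∈ nonZeroDivisors A) (hD : Ideal.span {g} ≠ ⊤) :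
    ∃ e : (Algebra.adjoin (Polynomial A)
        {x : Localization.Away (Polynomial.C g : Polynomial A) |
          ∃ b ∈ Ideal.span {(Polynomial.X : Polynomial A), Polynomial.C g},
            algebraMap (Polynomial A) (Localization.Away (Polynomial.C g : Polynomial A))
              (Polynomial.C g) * x =
            algebraMap (Polynomial A) (Localization.Away (Polynomial.C g : Polynomial A)) b})
      ≃ₐ[A] Polynomial A,
      e (algebraMap (Polynomial A) _ Polynomial.X) = Polynomial.C g * Polynomial.X :=
  affine_modification_of_cylinder_is_line_bundle_general g hreg
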